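/- arXiv:1902.06478 — 2 statements merged into one kernel-verified Lean document; each statement's English description precedes it below -/
import Mathlib

section
/- With $z_i(t) = \sum_{k=0}^{i} \gamma^k q^{k^2} \begin{bmatrix} i \\ k \end{bmatrix}_{q^2} \prod_{s=1}^{i} \frac{tq^{2(s-k)}-1}{q^{2s}-1}$, the leading coefficient of $z_i$ in $t$ equals $\prod_{s=0}^{i-1} q^{2s+1}(\gamma + q^{2s+1}) / \prod_{s=0}^{i-1}(q^{2i} - q^{2s})$; consequently, for distinct integers $0 = a_0 < \cdots < a_i$, $\sum_{k=0}^{i} \frac{\prod_{s=0}^{i-1}(q^{2a_i}-q^{2a_s})}{\prod_{s=0,s\neq k}^{i}(q^{2a_k}-q^{2a_s})} z_i(q^{2a_k}) = \prod_{s=0}^{i-1} q^{2s+1}(\gamma + q^{2s+1}) \frac{q^{2a_i}-q^{2a_s}}{q^{2i}-q^{2s}}$. -/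
/-- The `q²`-binomial coefficient `[j; k]_{q²}`. -/
noncomputable def qBinom (q : ℝ) (j k : ℕ) : ℝ :=
  (∏ s ∈ Finset.Icc 1 j, (q ^ (2 * s) - 1)) /
    ((∏ s ∈ Finset.Icc 1 k, (q ^ (2 * s) - 1)) * ∏ s ∈ Finset.Icc 1 (j - k), (q ^ (2 * s) - 1))

/-- The polynomial `z_j(t) = ∑_{k=0}^j γ^k q^{k²} [j;k]_{q²} ∏_{s=1}^j (t q^{2(s-k)}-1)/(q^{2s}-1)`. -/
noncomputable def zFun (γ q : ℝ) (j : ℕ) (t : ℝ) : ℝ :=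
  ∑ k ∈ Finset.range (j + 1),
    γ ^ k * q ^ (k ^ 2) * qBinom q j k *
      ∏ s ∈ Finset.Icc 1 j, (t * q ^ (2 * s) / q ^ (2 * k) - 1) / (q ^ (2 * s) - 1)

/-!
In the `k`-th summand of `z_i(t)` every factor is linear in `t`, so its coefficient of `t^i`
is `γ^k q^{(i-k)^2} [i;k]_{q²} q^i / ∏_{s=1}^i (q^{2s}-1)`. Summing over `k`, the
`q`-binomial theorem `∏_{s<i} (γ + q^{2s+1}) = ∑_k q^{(i-k)^2} [i;k]_{q²} γ^k` gives the
leading coefficient. As `z_i` has degree at most `i`, Lagrange interpolation at the `i + 1`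
distinct nodes `q^{2a_k}` expresses this coefficient as the divided difference of the values
`z_i(q^{2a_k})`, which is the second identity.
-/

open Finset Polynomial

section GaussBinom

variable {R : Type*} [CommRing R]

def qFactorial (Q : R) (n : ℕ) : R := ∏ s ∈ Icc 1 n, (Q ^ s - 1)

@[simp]
theorem qFactorial_zero (Q : R) : qFactorial Q 0 = 1 := rfl

theorem qFactorial_succ (Q : R) (n : ℕ) :
    qFactorial Q (n + 1) = qFactorial Q n * (Q ^ (n + 1) - 1) :=
  prod_Icc_succ_top (by omega) _

/-- Defined by the `q`-Pascal rule rather than as a quotient of `q`-factorials, so that it vanishes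
for `k > n`, which `qBinom` does not. -/
def gaussBinom (Q : R) : ℕ → ℕ → R
  | _, 0 => 1
  | 0, _ + 1 => 0
  | n + 1, k + 1 => gaussBinom Q n k + Q ^ (k + 1) * gaussBinom Q n (k + 1)

@[simp]
theorem gaussBinom_zero_right (Q : R) (n : ℕ) : gaussBinom Q n 0 = 1 := by
  cases n <;> rfl

theorem gaussBinom_succ_succ (Q : R) (n k : ℕ) :
    gaussBinom Q (n + 1) (k + 1) = gaussBinom Q n k + Q ^ (k + 1) * gaussBinom Q n (k + 1) :=
  rfl

theorem gaussBinom_eq_zero_of_lt (Q : R) {n k : ℕ} (h : n < k) : gaussBinom Q n k = 0 := by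
  induction n generalizing k with
  | zero => obtain ⟨k, rfl⟩ := Nat.exists_eq_add_of_lt h; rfl
  | succ n ih =>
    obtain ⟨k, rfl⟩ := Nat.exists_eq_add_of_lt h
    rw [gaussBinom_succ_succ, ih (by omega), ih (by omega), mul_zero, add_zero]

theorem gaussBinom_mul_qFactorial_mul_qFactorial (Q : R) {n k : ℕ} (hk : k ≤ n) :
    gaussBinom Q n k * qFactorial Q k * qFactorial Q (n - k) = qFactorial Q n := by
  induction n generalizing k with
  | zero => obtain rfl := Nat.le_zero.mp hk; simp
  | succ n ih =>
    rcases k with _ | k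
    · simp
    rw [gaussBinom_succ_succ, qFactorial_succ, Nat.add_sub_add_right, qFactorial_succ]
    rcases (Nat.le_of_succ_le_succ hk).eq_or_lt with rfl | hlt
    · rw [gaussBinom_eq_zero_of_lt Q k.lt_succ_self]
      linear_combination (Q ^ (k + 1) - 1) * ih le_rfl
    obtain ⟨m, hm⟩ : ∃ m, n - k = m + 1 := ⟨n - (k + 1), by omega⟩
    have hpow : Q ^ (k + 1) * Q ^ (m + 1) = Q ^ (n + 1) := by rw [← pow_add]; congr 1; omega
    have ih_k := ih hlt.le
    have ih_succ := ih hlt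
    rw [hm, qFactorial_succ] at ih_k
    rw [qFactorial_succ, show n - (k + 1) = m by omega] at ih_succ
    rw [hm, qFactorial_succ]
    linear_combination (Q ^ (k + 1) - 1) * ih_k + Q ^ (k + 1) * (Q ^ (m + 1) - 1) * ih_succ
      + qFactorial Q n * hpow

theorem pow_sub_sq_mul_sq_pow_succ {M : Type*} [Monoid M] (q : M) {n k : ℕ} (hk : k < n) :
    q ^ ((n - k) ^ 2) * (q ^ 2) ^ (k + 1) = q ^ (2 * n + 1) * q ^ ((n - (k + 1)) ^ 2) := by
  obtain ⟨m, rfl⟩ := Nat.exists_eq_add_of_lt hk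
  rw [show k + m + 1 - k = m + 1 by omega, show k + m + 1 - (k + 1) = m by omega, ← pow_mul,
    ← pow_add, ← pow_add]
  ring_nf

theorem prod_add_odd_pow_eq_sum_gaussBinom (q γ : R) (n : ℕ) :
    ∏ s ∈ range n, (γ + q ^ (2 * s + 1)) =
      ∑ k ∈ range (n + 1), q ^ ((n - k) ^ 2) * gaussBinom (q ^ 2) n k * γ ^ k := by
  induction n with
  | zero => simp
  | succ n ih =>
    have hγ : (∑ k ∈ range (n + 1), q ^ ((n - k) ^ 2) * gaussBinom (q ^ 2) n k * γ ^ k) * γ =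
        ∑ k ∈ range (n + 1), q ^ ((n - k) ^ 2) * gaussBinom (q ^ 2) n k * γ ^ (k + 1) := by
      rw [sum_mul]; exact sum_congr rfl fun k _ => by ring
    have hq : (∑ k ∈ range (n + 1), q ^ ((n - k) ^ 2) * gaussBinom (q ^ 2) n k * γ ^ k) *
          q ^ (2 * n + 1) =
        ∑ k ∈ range (n + 1),
          q ^ ((n - k) ^ 2) * ((q ^ 2) ^ (k + 1) * gaussBinom (q ^ 2) n (k + 1)) * γ ^ (k + 1) +
          q ^ ((n + 1) ^ 2) := by
      rw [sum_mul, sum_range_succ', sum_range_succ, gaussBinom_eq_zero_of_lt _ n.lt_succ_self]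
      simp only [Nat.sub_zero, Nat.sub_self, gaussBinom_zero_right, pow_zero, mul_zero, zero_mul,
        add_zero, mul_one]
      congr 1
      · refine sum_congr rfl fun k hk => ?_
        linear_combination (gaussBinom (q ^ 2) n (k + 1) * γ ^ (k + 1)) *
          (pow_sub_sq_mul_sq_pow_succ q (mem_range.mp hk)).symm
      · ring
    rw [prod_range_succ, ih, mul_add, hγ, hq, sum_range_succ' _ (n + 1)]
    simp only [gaussBinom_succ_succ, Nat.add_sub_add_right, mul_add, add_mul, sum_add_distrib,
      Nat.sub_zero, gaussBinom_zero_right, pow_zero, mul_one]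
    ring

theorem prod_range_pow_sub_pow (Q : R) (n : ℕ) :
    ∏ s ∈ range n, (Q ^ n - Q ^ s) = (∏ s ∈ range n, Q ^ s) * qFactorial Q n := by
  induction n with
  | zero => simp
  | succ n ih =>
    have hshift : ∏ s ∈ range n, (Q ^ (n + 1) - Q ^ (s + 1)) =
        Q ^ n * ∏ s ∈ range n, (Q ^ n - Q ^ s) := by
      rw [prod_congr rfl fun s _ => show Q ^ (n + 1) - Q ^ (s + 1) = Q * (Q ^ n - Q ^ s) by ring,
        prod_mul_distrib, prod_const, card_range]
    rw [prod_range_succ', hshift, ih, prod_range_succ, qFactorial_succ]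
    ring

theorem qFactorial_ne_zero [IsDomain R] {Q : R} (hQ : ∀ s ≠ 0, Q ^ s ≠ 1) (n : ℕ) :
    qFactorial Q n ≠ 0 :=
  prod_ne_zero_iff.mpr fun s hs => sub_ne_zero.mpr (hQ s (by simp at hs; omega))

theorem gaussBinom_eq_div {K : Type*} [Field K] {Q : K} (hQ : ∀ s ≠ 0, Q ^ s ≠ 1) {n k : ℕ}
    (hk : k ≤ n) :
    gaussBinom Q n k = qFactorial Q n / (qFactorial Q k * qFactorial Q (n - k)) := by
  rw [← gaussBinom_mul_qFactorial_mul_qFactorial Q hk, mul_assoc, mul_div_cancel_right₀]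
  exact mul_ne_zero (qFactorial_ne_zero hQ k) (qFactorial_ne_zero hQ (n - k))

end GaussBinom

theorem natDegree_prod_linear_le {R ι : Type*} [CommRing R] (s : Finset ι) (a b : ι → R) :
    (∏ j ∈ s, (C (a j) * X + C (b j))).natDegree ≤ #s := by
  refine (natDegree_prod_le (s := s) _).trans ?_
  simpa using sum_le_sum fun j (_ : j ∈ s) => natDegree_linear_le (a := a j) (b := b j)

theorem coeff_card_prod_linear {R ι : Type*} [CommRing R] (s : Finset ι) (a b : ι → R) :
    (∏ j ∈ s, (C (a j) * X + C (b j))).coeff #s = ∏ j ∈ s, a j := by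
  simpa using coeff_prod_of_natDegree_le (s := s) (fun j => C (a j) * X + C (b j)) 1
    fun j _ => natDegree_linear_le

theorem prod_Icc_pow_two_mul {M : Type*} [CommMonoid M] (q : M) (n : ℕ) :
    ∏ s ∈ Icc 1 n, q ^ (2 * s) = q ^ (n * (n + 1)) := by
  induction n with
  | zero => simp
  | succ n ih => rw [prod_Icc_succ_top (by omega), ih, ← pow_add]; ring_nf

theorem qFactorial_sq (q : ℝ) (n : ℕ) :
    qFactorial (q ^ 2) n = ∏ s ∈ Icc 1 n, (q ^ (2 * s) - 1) := by
  simp only [qFactorial, pow_mul]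

theorem sq_pow_ne_one {q : ℝ} (hq0 : 0 < q) (hq1 : q ≠ 1) : ∀ s ≠ 0, (q ^ 2) ^ s ≠ 1 :=
  fun s hs => by
  rw [← pow_mul, Ne, pow_eq_one_iff_of_nonneg hq0.le (by omega)]
  exact hq1

theorem qBinom_eq_gaussBinom {q : ℝ} (hq0 : 0 < q) (hq1 : q ≠ 1) {n k : ℕ} (hk : k ≤ n) :
    qBinom q n k = gaussBinom (q ^ 2) n k := by
  rw [gaussBinom_eq_div (sq_pow_ne_one hq0 hq1) hk, qBinom, qFactorial_sq, qFactorial_sq,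
    qFactorial_sq]

theorem pow_sq_mul_pow_mul_succ {M : Type*} [Monoid M] (q : M) {n k : ℕ} (hk : k ≤ n) :
    q ^ (k ^ 2) * q ^ (n * (n + 1)) = q ^ ((n - k) ^ 2) * q ^ n * (q ^ (2 * k)) ^ n := by
  obtain ⟨m, rfl⟩ := Nat.exists_eq_add_of_le hk
  rw [Nat.add_sub_cancel_left, ← pow_mul, ← pow_add, ← pow_add, ← pow_add]
  ring_nf

noncomputable def zPoly (γ q : ℝ) (i : ℕ) : ℝ[X] :=
  ∑ k ∈ range (i + 1), C (γ ^ k * q ^ (k ^ 2) * qBinom q i k) *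
    ∏ s ∈ Icc 1 i,
      (C (q ^ (2 * s) / q ^ (2 * k) / (q ^ (2 * s) - 1)) * X + C (-1 / (q ^ (2 * s) - 1)))

theorem eval_zPoly (γ q : ℝ) (i : ℕ) (t : ℝ) : (zPoly γ q i).eval t = zFun γ q i t := by
  simp only [zPoly, zFun, eval_finsetSum, eval_mul, eval_C, eval_prod, eval_add, eval_X]
  refine sum_congr rfl fun k _ => congrArg _ (prod_congr rfl fun s _ => ?_)
  ring

theorem natDegree_zPoly_le (γ q : ℝ) (i : ℕ) : (zPoly γ q i).natDegree ≤ i :=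
  natDegree_sum_le_of_forall_le _ _ fun k _ =>
    (natDegree_C_mul_le _ _).trans <| by
      simpa using natDegree_prod_linear_le (R := ℝ) (Icc 1 i) _ _

theorem coeff_zPoly_self_eq_sum (γ q : ℝ) (i : ℕ) :
    (zPoly γ q i).coeff i = ∑ k ∈ range (i + 1), γ ^ k * q ^ (k ^ 2) * qBinom q i k *
      ∏ s ∈ Icc 1 i, q ^ (2 * s) / q ^ (2 * k) / (q ^ (2 * s) - 1) := by
  simp only [zPoly, finsetSum_coeff, coeff_C_mul]
  refine sum_congr rfl fun k _ => congrArg _ ?_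
  simpa only [Nat.card_Icc, Nat.add_sub_cancel] using coeff_card_prod_linear (Icc 1 i) _ _

theorem coeff_zPoly_self (γ : ℝ) {q : ℝ} (hq0 : 0 < q) (hq1 : q ≠ 1) (i : ℕ) :
    (zPoly γ q i).coeff i =
      (∏ s ∈ range i, q ^ (2 * s + 1) * (γ + q ^ (2 * s + 1))) /
        ∏ s ∈ range i, (q ^ (2 * i) - q ^ (2 * s)) := by
  have hF := qFactorial_ne_zero (sq_pow_ne_one hq0 hq1) i
  have hterm : ∀ k ∈ range (i + 1), γ ^ k * q ^ (k ^ 2) * qBinom q i k *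
      ∏ s ∈ Icc 1 i, q ^ (2 * s) / q ^ (2 * k) / (q ^ (2 * s) - 1) =
        q ^ ((i - k) ^ 2) * gaussBinom (q ^ 2) i k * γ ^ k * (q ^ i / qFactorial (q ^ 2) i) := by
    intro k hk
    have hk : k ≤ i := Nat.le_of_lt_succ (mem_range.mp hk)
    rw [qBinom_eq_gaussBinom hq0 hq1 hk, prod_div_distrib, prod_div_distrib, prod_const,
      Nat.card_Icc, Nat.add_sub_cancel, prod_Icc_pow_two_mul, ← qFactorial_sq]
    field_simp
    linear_combination (gaussBinom (q ^ 2) i k * γ ^ k) * pow_sq_mul_pow_mul_succ q hk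
  have hnum : ∏ s ∈ range i, q ^ (2 * s + 1) * (γ + q ^ (2 * s + 1)) =
      (∏ s ∈ range i, (q ^ 2) ^ s) * q ^ i * ∏ s ∈ range i, (γ + q ^ (2 * s + 1)) := by
    simp only [prod_mul_distrib, pow_succ, prod_const, card_range, pow_mul]
  have hden : ∏ s ∈ range i, (q ^ (2 * i) - q ^ (2 * s)) =
      (∏ s ∈ range i, (q ^ 2) ^ s) * qFactorial (q ^ 2) i := by
    simp only [pow_mul, prod_range_pow_sub_pow]
  have hpow : ∏ s ∈ range i, (q ^ 2) ^ s ≠ 0 := prod_ne_zero_iff.mpr fun s _ => by positivity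
  rw [coeff_zPoly_self_eq_sum, sum_congr rfl hterm, ← sum_mul,
    ← prod_add_odd_pow_eq_sum_gaussBinom, hnum, hden]
  field_simp

theorem zFun_leading_coefficient_and_diagonal_general (γ q : ℝ) (hq0 : 0 < q) (hq1 : q ≠ 1)
    (i : ℕ) (a : ℕ → ℕ) (hmono : StrictMono a) :
    (∃ P : Polynomial ℝ, (∀ t : ℝ, P.eval t = zFun γ q i t) ∧
        P.coeff i =
          (∏ s ∈ Finset.range i, q ^ (2 * s + 1) * (γ + q ^ (2 * s + 1))) /
            ∏ s ∈ Finset.range i, (q ^ (2 * i) - q ^ (2 * s))) ∧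
      ∑ k ∈ Finset.range (i + 1),
          (∏ s ∈ Finset.range i, (q ^ (2 * a i) - q ^ (2 * a s))) /
              (∏ s ∈ (Finset.range (i + 1)).erase k, (q ^ (2 * a k) - q ^ (2 * a s))) *
            zFun γ q i (q ^ (2 * a k)) =
        ∏ s ∈ Finset.range i,
          q ^ (2 * s + 1) * (γ + q ^ (2 * s + 1)) *
            ((q ^ (2 * a i) - q ^ (2 * a s)) / (q ^ (2 * i) - q ^ (2 * s))) := by
  have hcoeff := coeff_zPoly_self γ hq0 hq1 i
  refine ⟨⟨zPoly γ q i, eval_zPoly γ q i, hcoeff⟩, ?_⟩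
  have hnodes : Set.InjOn (fun n => q ^ (2 * a n)) (range (i + 1)) :=
    ((pow_right_injective₀ hq0 hq1).comp
      ((mul_right_injective₀ two_ne_zero).comp hmono.injective)).injOn
  have hdeg : (zPoly γ q i).degree < #(range (i + 1)) := by
    rw [card_range]
    exact (degree_le_of_natDegree_le (natDegree_zPoly_le γ q i)).trans_lt
      (by exact_mod_cast i.lt_succ_self)
  have hdiv := Lagrange.coeff_eq_sum hnodes hdeg
  simp only [card_range, Nat.add_sub_cancel, hcoeff, eval_zPoly] at hdiv
  rw [prod_mul_distrib, prod_div_distrib, mul_div_left_comm, hdiv, mul_sum]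
  exact sum_congr rfl fun k _ => by ring

/-- The leading coefficient in `t` of the degree-`i` polynomial `z_i(t)` equals
`∏_{s=0}^{i-1} q^{2s+1}(γ+q^{2s+1}) / ∏_{s=0}^{i-1}(q^{2i}-q^{2s})`; consequently, for
integers `0 = a_0 < a_1 < ⋯ < a_i`, the divided-difference sum
`∑_{k=0}^i (∏_{s=0}^{i-1}(q^{2a_i}-q^{2a_s}) / ∏_{s≠k}(q^{2a_k}-q^{2a_s})) z_i(q^{2a_k})`
equals `∏_{s=0}^{i-1} q^{2s+1}(γ+q^{2s+1})(q^{2a_i}-q^{2a_s})/(q^{2i}-q^{2s})`. -/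
theorem zFun_leading_coefficient_and_diagonal (γ q : ℝ) (hq0 : 0 < q) (hq1 : q ≠ 1)
    (i : ℕ) (a : ℕ → ℕ) (ha0 : a 0 = 0) (hmono : StrictMono a) :
    (∃ P : Polynomial ℝ, (∀ t : ℝ, P.eval t = zFun γ q i t) ∧
        P.coeff i =
          (∏ s ∈ Finset.range i, q ^ (2 * s + 1) * (γ + q ^ (2 * s + 1))) /
            ∏ s ∈ Finset.range i, (q ^ (2 * i) - q ^ (2 * s))) ∧
      ∑ k ∈ Finset.range (i + 1),
          (∏ s ∈ Finset.range i, (q ^ (2 * a i) - q ^ (2 * a s))) /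
              (∏ s ∈ (Finset.range (i + 1)).erase k, (q ^ (2 * a k) - q ^ (2 * a s))) *
            zFun γ q i (q ^ (2 * a k)) =
        ∏ s ∈ Finset.range i,
          q ^ (2 * s + 1) * (γ + q ^ (2 * s + 1)) *
            ((q ^ (2 * a i) - q ^ (2 * a s)) / (q ^ (2 * i) - q ^ (2 * s))) :=
  zFun_leading_coefficient_and_diagonal_general γ q hq0 hq1 i a hmono
end

section
/- With $G_\gamma$ the geodesic polynomial as defined, one has the identity $G_{\gamma^{-1}}(X^{-1}, Y; U^{-1}, V) = \frac{1}{U^2 X^2 \gamma} G_\gamma(X,Y;U,V)$ as rational functions (valid for $U, X, \gamma \neq 0$). -/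
/-- The geodesic polynomial `G_γ(X,Y;U,V)` whose zero set is the algebraic equation of
geodesics for scaled weighted Schröder paths. -/
def geoG (γ X Y U V : ℝ) : ℝ :=
  (U - 1) * (V - 1) * (γ * (U * V + X ^ 2 * Y ^ 2) - (V * X ^ 2 + U * Y ^ 2)) -
    X * Y * ((U + 1) * (V + 1) * (1 + U * V + γ * (U + V)) - 8 * (1 + γ) * U * V) +
    (V - 1) * (X ^ 2 + U) * Y * (U * V - 1 + γ * (V - U)) +
    (U - 1) * (Y ^ 2 + V) * X * (U * V - 1 + γ * (U - V))

/-- The "unphysical" left-right symmetry of the geodesic polynomial: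
`G_{γ⁻¹}(X⁻¹, Y; U⁻¹, V) = G_γ(X,Y;U,V) / (U²X²γ)` for `U, X, γ ≠ 0`. -/
theorem geoG_leftright_symmetry (γ X Y U V : ℝ) (hγ : γ ≠ 0) (hU : U ≠ 0) (hX : X ≠ 0) :
    geoG γ⁻¹ X⁻¹ Y U⁻¹ V = geoG γ X Y U V / (U ^ 2 * X ^ 2 * γ) := by
  unfold geoG
  field_simp
  ring
end
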